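/- Let N ∈ ℕ, let f : [0,1] → ℝ^N be continuous, and let I = (i_1,…,i_k) and J = (j_1,…,j_l) be multi-indices of lengths k and l. Set R = (r_1,…,r_{k+l}) = (i_1,…,i_k,j_1,…,j_l). Then S^I(f) · S^J(f) = Σ_{σ ∈ Sh(k,l)} S^{(r_{σ(1)},…,r_{σ(k+l)})}(f), where Sh(k,l) is the set of (k,l)-shuffles, i.e. permutations σ of {1,…,k+l} such that σ^{-1}(1) < σ^{-1}(2) < ⋯ < σ^{-1}(k) and σ^{-1}(k+1) < σ^{-1}(k+2) < ⋯ < σ^{-1}(k+l). (Shuffle product identity for the path signature.) -/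

import Mathlib

open MeasureTheory

/-- The simplex of nondecreasing `m`-tuples with entries in `[a,b]`. -/
def simplex (m : ℕ) (a b : ℝ) : Set (Fin m → ℝ) :=
  {t | (∀ j, t j ∈ Set.Icc a b) ∧ ∀ j k : Fin m, j ≤ k → t j ≤ t k}

/-- The signature coefficient of `f : [0,1] → ℝ^N` with respect to a multi-index. -/
noncomputable def sig {N : ℕ} (f : ℝ → Fin N → ℝ) {m : ℕ} (I : Fin m → Fin N) : ℝ :=
  ∫ t in simplex m 0 1, ∏ j, f (t j) (I j)

/-- The set of `(k,l)`-shuffles: permutations `σ` of `Fin (k+l)` whose inverse is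
increasing on the first `k` indices and on the last `l` indices. -/
noncomputable def shuffles (k l : ℕ) : Finset (Equiv.Perm (Fin (k + l))) :=
  open scoped Classical in
  Finset.univ.filter (fun σ =>
    (∀ p q : Fin (k + l), (p : ℕ) < k → (q : ℕ) < k → p < q → σ⁻¹ p < σ⁻¹ q) ∧
    (∀ p q : Fin (k + l), k ≤ (p : ℕ) → k ≤ (q : ℕ) → p < q → σ⁻¹ p < σ⁻¹ q))

/-!
Fubini writes `S^I(f) · S^J(f)` as an integral over `Δ_k × Δ_l`. For `(s, t)` in this product,
the permutation that stably sorts the concatenation `s ++ t` is a `(k,l)`-shuffle `σ`, and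
`(s ++ t) ∘ σ` lies in `Δ_{k+l}`; conversely, for a shuffle `σ` such a sorted point comes from
`Δ_k × Δ_l`. So `Δ_k × Δ_l` is the union over shuffles `σ` of the cells
`{(s, t) | (s ++ t) ∘ σ ∈ Δ_{k+l}}`, each a volume-preserving copy of `Δ_{k+l}` on which the
integrand becomes that of `S^{R ∘ σ}`. Two cells can only meet where `s ++ t` has a repeated
entry, a null set.
-/

open Set Function

section Shuffles

variable {α : Type*} {k l : ℕ}

theorem Tuple.sort_inv_lt_sort_inv [LinearOrder α] {n : ℕ} {w : Fin n → α} {p q : Fin n}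
    (hpq : p < q) (hw : w p ≤ w q) : (Tuple.sort w)⁻¹ p < (Tuple.sort w)⁻¹ q := by
  by_contra! hle
  have hlt : (Tuple.sort w)⁻¹ q < (Tuple.sort w)⁻¹ p :=
    hle.lt_of_ne fun h => hpq.ne' ((Tuple.sort w)⁻¹.injective h)
  have hwqp : w q ≤ w p := by
    simpa [Equiv.Perm.inv_def] using Tuple.monotone_sort w hlt.le
  have := (Tuple.eq_sort_iff (f := w)).mp rfl |>.2 _ _ hlt (by simpa using le_antisymm hwqp hw)
  simp only [Equiv.Perm.inv_def, Equiv.apply_symm_apply] at this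
  exact (this.trans hpq).false

theorem Equiv.Perm.eq_of_monotone_comp [PartialOrder α] {n : ℕ} {w : Fin n → α}
    (hw : Injective w) {σ τ : Equiv.Perm (Fin n)} (hσ : Monotone (w ∘ σ))
    (hτ : Monotone (w ∘ τ)) : σ = τ :=
  Equiv.ext fun p => hw (congrFun (Tuple.unique_monotone hσ hτ) p)

theorem mem_shuffles_iff {σ : Equiv.Perm (Fin (k + l))} :
    σ ∈ shuffles k l ↔
      StrictMono (fun a => σ⁻¹ (Fin.castAdd l a)) ∧
        StrictMono (fun b => σ⁻¹ (Fin.natAdd k b)) := by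
  classical
  simp only [shuffles, Finset.mem_filter, Finset.mem_univ, true_and]
  refine and_congr ⟨fun h a a' haa' => h _ _ a.2 a'.2 haa', fun h p q hp hq hpq => ?_⟩
    ⟨fun h b b' hbb' => h _ _ (by simp) (by simp) (by simpa using hbb'),
      fun h p q hp hq hpq => ?_⟩
  · exact h (a := ⟨p, hp⟩) (b := ⟨q, hq⟩) hpq
  · obtain ⟨b, rfl⟩ : ∃ b : Fin l, Fin.natAdd k b = p :=
      ⟨⟨p - k, by omega⟩, Fin.ext (by simp; omega)⟩
    obtain ⟨b', rfl⟩ : ∃ b : Fin l, Fin.natAdd k b = q :=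
      ⟨⟨q - k, by omega⟩, Fin.ext (by simp; omega)⟩
    exact h ((Fin.natAdd_lt_natAdd_iff k).mp hpq)

theorem monotone_of_monotone_append_comp [Preorder α] {x : Fin k → α} {y : Fin l → α}
    {σ : Equiv.Perm (Fin (k + l))} (hσ : σ ∈ shuffles k l)
    (h : Monotone (Fin.append x y ∘ σ)) : Monotone x ∧ Monotone y := by
  rw [mem_shuffles_iff] at hσ
  exact ⟨fun a a' haa' => by simpa using h (hσ.1.monotone haa'),
    fun b b' hbb' => by simpa using h (hσ.2.monotone hbb')⟩

theorem sort_append_mem_shuffles [LinearOrder α] {x : Fin k → α} {y : Fin l → α}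
    (hx : Monotone x) (hy : Monotone y) : Tuple.sort (Fin.append x y) ∈ shuffles k l := by
  rw [mem_shuffles_iff]
  exact ⟨fun a a' h => Tuple.sort_inv_lt_sort_inv (show Fin.castAdd l a < Fin.castAdd l a' from h)
      (by simpa using hx h.le),
    fun b b' h => Tuple.sort_inv_lt_sort_inv ((Fin.natAdd_lt_natAdd_iff k).mpr h)
      (by simpa using hy h.le)⟩

theorem forall_append_comp_perm_iff {x : Fin k → α} {y : Fin l → α}
    (σ : Equiv.Perm (Fin (k + l))) (P : α → Prop) :
    (∀ p, P (Fin.append x y (σ p))) ↔ (∀ a, P (x a)) ∧ ∀ b, P (y b) := by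
  rw [σ.forall_congr_right (q := fun q => P (Fin.append x y q)), Fin.forall_fin_add]
  simp

end Shuffles

section Cells

variable {k l : ℕ}

def shuffleCell (k l : ℕ) (a b : ℝ) (σ : Equiv.Perm (Fin (k + l))) :
    Set ((Fin k → ℝ) × (Fin l → ℝ)) :=
  (fun z => Fin.append z.1 z.2 ∘ σ) ⁻¹' simplex (k + l) a b

theorem prod_simplex_eq_biUnion_shuffleCell (k l : ℕ) (a b : ℝ) :
    simplex k a b ×ˢ simplex l a b = ⋃ σ ∈ shuffles k l, shuffleCell k l a b σ := by
  ext ⟨x, y⟩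
  simp only [mem_prod, mem_iUnion, exists_prop]
  change ((∀ j, _) ∧ Monotone x) ∧ ((∀ j, _) ∧ Monotone y) ↔
    ∃ σ ∈ shuffles k l,
      (∀ p, Fin.append x y (σ p) ∈ Icc a b) ∧ Monotone (Fin.append x y ∘ σ)
  simp only [forall_append_comp_perm_iff]
  constructor
  · rintro ⟨⟨hxI, hx⟩, hyI, hy⟩
    exact ⟨_, sort_append_mem_shuffles hx hy, ⟨hxI, hyI⟩, Tuple.monotone_sort _⟩
  · rintro ⟨σ, hσ, ⟨hxI, hyI⟩, hmono⟩
    obtain ⟨hx, hy⟩ := monotone_of_monotone_append_comp hσ hmono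
    exact ⟨⟨hxI, hx⟩, hyI, hy⟩

noncomputable def MeasurableEquiv.appendPerm (α : Type*) [MeasurableSpace α]
    (σ : Equiv.Perm (Fin (k + l))) :
    (Fin k → α) × (Fin l → α) ≃ᵐ (Fin (k + l) → α) :=
  (MeasurableEquiv.sumPiEquivProdPi fun _ => α).symm.trans
    (MeasurableEquiv.piCongrLeft (fun _ => α) (finSumFinEquiv.trans σ.symm))

theorem MeasurableEquiv.coe_appendPerm (α : Type*) [MeasurableSpace α]
    (σ : Equiv.Perm (Fin (k + l))) :
    ⇑(MeasurableEquiv.appendPerm α σ) = fun z => Fin.append z.1 z.2 ∘ σ := by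
  ext z p
  obtain ⟨q, rfl⟩ := (finSumFinEquiv.trans σ.symm).surjective p
  rw [MeasurableEquiv.appendPerm, MeasurableEquiv.trans_apply, MeasurableEquiv.coe_piCongrLeft,
    Equiv.piCongrLeft_apply_apply]
  cases q <;> simp [MeasurableEquiv.coe_sumPiEquivProdPi_symm]

theorem MeasurableEquiv.measurePreserving_appendPerm (α : Type*) [MeasureSpace α]
    [SigmaFinite (volume : Measure α)] (σ : Equiv.Perm (Fin (k + l))) :
    MeasurePreserving (MeasurableEquiv.appendPerm α σ) :=
  (volume_measurePreserving_piCongrLeft (fun _ => α) _).comp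
    (volume_measurePreserving_sumPiEquivProdPi_symm fun _ => α)

theorem isClosed_simplex (m : ℕ) (a b : ℝ) : IsClosed (simplex m a b) := by
  simp only [simplex, ofPred_and, ofPred_forall]
  exact (isClosed_iInter fun j => isClosed_Icc.preimage (continuous_apply j)).inter
    (isClosed_iInter fun j => isClosed_iInter fun j' => isClosed_iInter fun _ =>
      isClosed_le (continuous_apply j) (continuous_apply j'))

theorem measurableSet_shuffleCell (a b : ℝ) (σ : Equiv.Perm (Fin (k + l))) :
    MeasurableSet (shuffleCell k l a b σ) := by
  rw [shuffleCell, ← MeasurableEquiv.coe_appendPerm]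
  exact (isClosed_simplex _ a b).measurableSet.preimage
    (MeasurableEquiv.appendPerm ℝ σ).measurable

theorem ae_injective (ι : Type*) [Fintype ι] : ∀ᵐ u : ι → ℝ, Injective u := by
  have h : ∀ p q : ι, ∀ᵐ u : ι → ℝ, u p = u q → p = q := by
    intro p q
    classical
    by_cases hpq : p = q
    · exact Filter.Eventually.of_forall fun _ _ => hpq
    let φ : (ι → ℝ) →ₗ[ℝ] ℝ :=
      LinearMap.proj (R := ℝ) (φ := fun _ : ι => ℝ) p - LinearMap.proj q
    have hφ : LinearMap.ker φ ≠ ⊤ := fun htop => by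
      have : Pi.single p (1 : ℝ) ∈ LinearMap.ker φ := htop ▸ Submodule.mem_top
      simp [φ, Ne.symm hpq] at this
    rw [ae_iff]
    refine measure_mono_null (fun u hu => ?_) (Measure.addHaar_submodule volume _ hφ)
    simp_all [φ, sub_eq_zero]
  filter_upwards [ae_all_iff.2 fun p => ae_all_iff.2 (h p)] with u hu p q using hu p q

theorem aedisjoint_shuffleCell (a b : ℝ) {σ τ : Equiv.Perm (Fin (k + l))} (hστ : σ ≠ τ) :
    AEDisjoint volume (shuffleCell k l a b σ) (shuffleCell k l a b τ) := by
  have hinj : ∀ᵐ z : (Fin k → ℝ) × (Fin l → ℝ), Injective (Fin.append z.1 z.2) := by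
    simpa [MeasurableEquiv.coe_appendPerm] using (MeasurableEquiv.measurePreserving_appendPerm ℝ 1
      ).quasiMeasurePreserving.ae (ae_injective _)
  refine measure_mono_null ?_ (ae_iff.mp hinj)
  rintro z ⟨hσ, hτ⟩ hz
  exact hστ (Equiv.Perm.eq_of_monotone_comp hz hσ.2 hτ.2)

end Cells

theorem integral_biUnion_finset₀ {X E ι : Type*} [MeasurableSpace X] [NormedAddCommGroup E]
    [NormedSpace ℝ E] {μ : Measure X} {f : X → E} (t : Finset ι) {s : ι → Set X}
    (hs : ∀ i ∈ t, NullMeasurableSet (s i) μ) (hd : (t : Set ι).Pairwise (AEDisjoint μ on s))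
    (hf : IntegrableOn f (⋃ i ∈ t, s i) μ) :
    ∫ x in ⋃ i ∈ t, s i, f x ∂μ = ∑ i ∈ t, ∫ x in s i, f x ∂μ := by
  have hU : ⋃ i ∈ t, s i = ⋃ i : t, s i := (iUnion_subtype (· ∈ t) (s ·)).symm
  rw [← Finset.sum_coe_sort, ← tsum_fintype (L := .unconditional _), hU]
  rw [hU] at hf
  exact integral_iUnion_ae (fun i => hs i i.2)
    (fun i j hij => hd i.2 j.2 (Subtype.coe_ne_coe.2 hij)) hf

section Signature

variable {N k l : ℕ} {f : ℝ → Fin N → ℝ}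

theorem integrableOn_simplex_prod (hf : ContinuousOn f (Icc 0 1)) {m : ℕ} (K : Fin m → Fin N) :
    IntegrableOn (fun t : Fin m → ℝ => ∏ j, f (t j) (K j)) (simplex m 0 1) := by
  have hcont : ContinuousOn (fun t : Fin m → ℝ => ∏ j, f (t j) (K j))
      (univ.pi fun _ => Icc 0 1) :=
    continuousOn_finsetProd _ fun j _ => ((continuous_apply (K j)).comp_continuousOn hf).comp
      (continuous_apply j).continuousOn fun t ht => ht j (mem_univ j)
  exact (hcont.integrableOn_compact (isCompact_univ_pi fun _ => isCompact_Icc)).mono_set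
    fun t ht j _ => ht.1 j

variable (f) (I : Fin k → Fin N) (J : Fin l → Fin N)

theorem sig_mul_sig :
    sig f I * sig f J = ∫ z in simplex k 0 1 ×ˢ simplex l 0 1,
      (∏ a, f (z.1 a) (I a)) * ∏ b, f (z.2 b) (J b) :=
  (setIntegral_prod_mul _ _ _ _).symm

theorem integrableOn_prod_simplex_sig_integrand (hf : ContinuousOn f (Icc 0 1)) :
    IntegrableOn (fun z : (Fin k → ℝ) × (Fin l → ℝ) =>
      (∏ a, f (z.1 a) (I a)) * ∏ b, f (z.2 b) (J b)) (simplex k 0 1 ×ˢ simplex l 0 1) := by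
  rw [IntegrableOn, Measure.volume_eq_prod, ← Measure.prod_restrict]
  exact (integrableOn_simplex_prod hf I).mul_prod (integrableOn_simplex_prod hf J)

theorem sig_comp_perm_eq_setIntegral_shuffleCell (σ : Equiv.Perm (Fin (k + l))) :
    sig f (fun p => Fin.append I J (σ p)) =
      ∫ z in shuffleCell k l 0 1 σ, (∏ a, f (z.1 a) (I a)) * ∏ b, f (z.2 b) (J b) := by
  let e := MeasurableEquiv.appendPerm ℝ σ
  have hcell : shuffleCell k l 0 1 σ = e ⁻¹' simplex (k + l) 0 1 := by
    rw [shuffleCell, MeasurableEquiv.coe_appendPerm]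
  rw [sig, ← (MeasurableEquiv.measurePreserving_appendPerm ℝ σ).setIntegral_preimage_emb
    e.measurableEmbedding, ← hcell]
  refine setIntegral_congr_fun (measurableSet_shuffleCell 0 1 σ) fun z _ => ?_
  simp only [MeasurableEquiv.coe_appendPerm, Function.comp_apply]
  rw [Equiv.prod_comp σ (fun q => f (Fin.append z.1 z.2 q) (Fin.append I J q)), Fin.prod_univ_add]
  simp

end Signature

/-- **Shuffle product identity for the path signature:**
`S^I(f) · S^J(f) = Σ_{σ ∈ Sh(k,l)} S^{(r_{σ(1)}, …, r_{σ(k+l)})}(f)` where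
`R = (r_1, …, r_{k+l})` is the concatenation of `I` and `J`. -/
theorem signature_shuffle_product (N k l : ℕ) (f : ℝ → Fin N → ℝ)
    (hf : ContinuousOn f (Set.Icc 0 1))
    (I : Fin k → Fin N) (J : Fin l → Fin N) :
    sig f I * sig f J =
      ∑ σ ∈ shuffles k l, sig f (fun p => Fin.append I J (σ p)) := by
  have hint := integrableOn_prod_simplex_sig_integrand f I J hf
  rw [prod_simplex_eq_biUnion_shuffleCell] at hint
  rw [sig_mul_sig, prod_simplex_eq_biUnion_shuffleCell,
    integral_biUnion_finset₀ _ (fun σ _ => (measurableSet_shuffleCell 0 1 σ).nullMeasurableSet)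
      (fun σ _ τ _ => aedisjoint_shuffleCell 0 1) hint]
  exact Finset.sum_congr rfl fun σ _ => (sig_comp_perm_eq_setIntegral_shuffleCell f I J σ).symm
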